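/- arXiv:1104.3689 — 7 statements merged into one kernel-verified Lean document; each statement's English description precedes it below -/
import Mathlib

section
/- If f is a regular discrete conjugate net in projective 3-space, then its first Laplace transform Λ₁f, defined by Λ₁f(i,j) = (f(i,j) ∨ f(i+1,j)) ∩ (f(i,j+1) ∨ f(i+1,j+1)), is again a discrete conjugate net: every elementary quadrilateral of Λ₁f is planar. -/
open Submodule

abbrev Subsp (K : Type*) [Field K] := Submodule K (Fin 4 → K)

variable {K : Type*} [Field K]

def isPoint (S : Subsp K) : Prop := Module.finrank K ↥S = 1
def isLine  (S : Subsp K) : Prop := Module.finrank K ↥S = 2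
def isPlane (S : Subsp K) : Prop := Module.finrank K ↥S = 3
def skew (L M : Subsp K) : Prop := L ⊓ M = ⊥
def meets (L M : Subsp K) : Prop := L ⊓ M ≠ ⊥
def Pi1 (f : ℤ → ℤ → Subsp K) (i j : ℤ) : Subsp K := f (i-1) j ⊔ f i j ⊔ f (i+1) j
def Pi2 (f : ℤ → ℤ → Subsp K) (i j : ℤ) : Subsp K := f i (j-1) ⊔ f i j ⊔ f i (j+1)
def Lap1 (f : ℤ → ℤ → Subsp K) (i j : ℤ) : Subsp K :=
  (f i j ⊔ f (i+1) j) ⊓ (f i (j+1) ⊔ f (i+1) (j+1))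
def Lap2 (f : ℤ → ℤ → Subsp K) (i j : ℤ) : Subsp K :=
  (f i j ⊔ f i (j+1)) ⊓ (f (i+1) j ⊔ f (i+1) (j+1))
def isNet (f : ℤ → ℤ → Subsp K) : Prop := ∀ i j, isPoint (f i j)
def isConjugate (f : ℤ → ℤ → Subsp K) : Prop :=
  ∀ i j, Module.finrank K ↥(f i j ⊔ f (i+1) j ⊔ f (i+1) (j+1) ⊔ f i (j+1)) ≤ 3
def isRegular (f : ℤ → ℤ → Subsp K) : Prop :=
  (∀ i j, isPlane (Pi1 f i j) ∧ isPlane (Pi2 f i j)) ∧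
  (∀ i j, Module.finrank K ↥(f i j ⊔ f (i+1) j ⊔ f (i+1) (j+1) ⊔ f i (j+1)) = 3) ∧
  (∀ i j, f i j ⊔ f (i+1) j ≠ f i (j+1) ⊔ f (i+1) (j+1)) ∧
  (∀ i j, f i j ⊔ f i (j+1) ≠ f (i+1) j ⊔ f (i+1) (j+1))

/-- The first Laplace transform of a regular discrete conjugate net is again
a discrete conjugate net: every elementary quadrilateral is planar. -/
theorem laplace_transform_is_conjugate_net (h2 : (2 : K) ≠ 0)
    (f : ℤ → ℤ → Subsp K) (hnet : isNet f) (hconj : isConjugate f)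
    (hreg : isRegular f) :
    isNet (Lap1 f) ∧ isConjugate (Lap1 f) := by

  have hL2 : ∀ i j : ℤ, Module.finrank K ↥(f i j ⊔ f (i+1) j) = 2 := by
    intro i j
    have hplane : Module.finrank K ↥(Pi1 f i j) = 3 := (hreg.1 i j).1
    have hle : Module.finrank K ↥(f i j ⊔ f (i+1) j)
        ≤ Module.finrank K ↥(f i j) + Module.finrank K ↥(f (i+1) j) := by
      have := Submodule.finrank_sup_add_finrank_inf_eq (f i j) (f (i+1) j)
      omega
    have hub : Module.finrank K ↥(f i j ⊔ f (i+1) j) ≤ 2 := by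
      rw [hnet i j, hnet (i+1) j] at hle; omega
    have hsup : Module.finrank K ↥(Pi1 f i j)
        ≤ Module.finrank K ↥(f (i-1) j) + Module.finrank K ↥(f i j ⊔ f (i+1) j) := by
      have h := Submodule.finrank_sup_add_finrank_inf_eq (f (i-1) j) (f i j ⊔ f (i+1) j)
      have : Pi1 f i j = f (i-1) j ⊔ (f i j ⊔ f (i+1) j) := by rw [Pi1, sup_assoc]
      rw [this]; omega
    rw [hplane, hnet (i-1) j] at hsup
    omega
  have hM2 : ∀ i j : ℤ, Module.finrank K ↥(f i (j+1) ⊔ f (i+1) (j+1)) = 2 := fun i j => hL2 i (j+1)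
  have hnet' : isNet (Lap1 f) := by
    intro i j
    have key := Submodule.finrank_sup_add_finrank_inf_eq
      (f i j ⊔ f (i+1) j) (f i (j+1) ⊔ f (i+1) (j+1))
    have hquad : Module.finrank K
        ↥((f i j ⊔ f (i+1) j) ⊔ (f i (j+1) ⊔ f (i+1) (j+1))) = 3 := by
      have h3 := hreg.2.1 i j
      have heq : (f i j ⊔ f (i+1) j) ⊔ (f i (j+1) ⊔ f (i+1) (j+1))
          = f i j ⊔ f (i+1) j ⊔ f (i+1) (j+1) ⊔ f i (j+1) := by
        simp only [sup_assoc, sup_comm, sup_left_comm]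
      rw [heq]; exact h3
    rw [hquad, hL2 i j, hM2 i j] at key
    show Module.finrank K ↥(Lap1 f i j) = 1
    rw [Lap1]; omega
  refine ⟨hnet', ?_⟩
  intro i j
  have e1 : (i : ℤ) + 1 - 1 = i := by ring
  have e2 : (i : ℤ) + 1 + 1 = i + 2 := by ring
  have hP : Pi1 f (i+1) (j+1) = f i (j+1) ⊔ f (i+1) (j+1) ⊔ f (i+2) (j+1) := by
    rw [Pi1, e1, e2]
  have hA : f i (j+1) ⊔ f (i+1) (j+1) ≤ Pi1 f (i+1) (j+1) := by rw [hP]; exact le_sup_left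
  have hB : f (i+1) (j+1) ≤ Pi1 f (i+1) (j+1) := le_sup_right.trans hA
  have hC : f (i+2) (j+1) ≤ Pi1 f (i+1) (j+1) := by rw [hP]; exact le_sup_right
  have h1 : Lap1 f i j ≤ Pi1 f (i+1) (j+1) := inf_le_right.trans hA
  have h2' : Lap1 f (i+1) j ≤ Pi1 f (i+1) (j+1) := by
    refine inf_le_right.trans ?_
    rw [e2]; exact sup_le hB hC
  have h3 : Lap1 f (i+1) (j+1) ≤ Pi1 f (i+1) (j+1) := by
    refine inf_le_left.trans ?_
    rw [e2]; exact sup_le hB hC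
  have h4 : Lap1 f i (j+1) ≤ Pi1 f (i+1) (j+1) := inf_le_left.trans hA
  have hle : Lap1 f i j ⊔ Lap1 f (i+1) j ⊔ Lap1 f (i+1) (j+1) ⊔ Lap1 f i (j+1)
      ≤ Pi1 f (i+1) (j+1) := sup_le (sup_le (sup_le h1 h2') h3) h4
  calc Module.finrank K ↥(Lap1 f i j ⊔ Lap1 f (i+1) j ⊔ Lap1 f (i+1) (j+1) ⊔ Lap1 f i (j+1))
      ≤ Module.finrank K ↥(Pi1 f (i+1) (j+1)) := Submodule.finrank_mono hle
    _ = 3 := (hreg.1 (i+1) (j+1)).1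
end

section
/- All four points Λₖf(i,j), Λₖf(i+1,j), Λₖf(i,j+1), Λₖf(i+1,j+1) of an elementary quadrilateral of the k-th Laplace transform (k = 1, 2) lie in the osculating plane Πₖf(i+1,j+1) of the original net f. -/
open Submodule

variable {K : Type*} [Field K]

/-- All four points of an elementary quadrilateral of the k-th Laplace
transform lie in the osculating plane Πₖ f(i+1,j+1) of the original net. -/
theorem laplace_quadrilateral_in_osculating_plane (h2 : (2 : K) ≠ 0)
    (f : ℤ → ℤ → Subsp K) (hnet : isNet f) (hconj : isConjugate f)
    (hreg : isRegular f) :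
    ∀ i j : ℤ,
      (Lap1 f i j ≤ Pi1 f (i+1) (j+1) ∧
       Lap1 f (i+1) j ≤ Pi1 f (i+1) (j+1) ∧
       Lap1 f i (j+1) ≤ Pi1 f (i+1) (j+1) ∧
       Lap1 f (i+1) (j+1) ≤ Pi1 f (i+1) (j+1)) ∧
      (Lap2 f i j ≤ Pi2 f (i+1) (j+1) ∧
       Lap2 f (i+1) j ≤ Pi2 f (i+1) (j+1) ∧
       Lap2 f i (j+1) ≤ Pi2 f (i+1) (j+1) ∧
       Lap2 f (i+1) (j+1) ≤ Pi2 f (i+1) (j+1)) := by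
  intro i j
  have e1 : i + 1 - 1 = i := by ring
  have e3 : j + 1 - 1 = j := by ring
  simp only [Lap1, Lap2, Pi1, Pi2, e1, e3]
  refine ⟨⟨?_, ?_, ?_, ?_⟩, ?_, ?_, ?_, ?_⟩
  · refine le_trans inf_le_right ?_
    exact le_sup_left
  · refine le_trans inf_le_right ?_
    refine sup_le ?_ ?_
    · exact le_sup_of_le_left le_sup_right
    · exact le_sup_right
  · refine le_trans inf_le_left ?_
    exact le_sup_left
  · refine le_trans inf_le_left ?_
    refine sup_le ?_ ?_
    · exact le_sup_of_le_left le_sup_right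
    · exact le_sup_right
  · refine le_trans inf_le_right ?_
    exact le_sup_left
  · refine le_trans inf_le_left ?_
    exact le_sup_left
  · refine le_trans inf_le_right ?_
    refine sup_le ?_ ?_
    · exact le_sup_of_le_left le_sup_right
    · exact le_sup_right
  · refine le_trans inf_le_left ?_
    refine sup_le ?_ ?_
    · exact le_sup_of_le_left le_sup_right
    · exact le_sup_right
end

section
/- If four pairwise skew lines in projective 3-space over a field (char ≠ 2) admit four pairwise distinct transversal lines (each meeting all four), then the four lines belong to a regulus, i.e., they are rulings of a common doubly ruled quadric surface. -/
/-! In Plücker coordinates a line becomes a vector of `K⁶` that is isotropic for the symmetric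
bilinear form whose value on two lines is the determinant of their four spanning vectors; so
two lines meet iff their Plücker vectors are orthogonal. For pairwise skew lines these vectors
are pairwise non-orthogonal, and (as `2 ≠ 0`) such an isotropic triangle spans a
nondegenerate 3-space. Three transversals of `A, B, C` are pairwise skew, and their Plücker
vectors together with those of `A, B, C` form a basis of `K⁶`. The Plücker vector of `D` is
orthogonal to the three transversals, which forces it into the span of those of `A, B, C`;
symmetrically, each of the four lines lies in the span of the other three, and a line
orthogonal to three of them is orthogonal to the fourth. -/

open Submodule

variable {K : Type*} [Field K]

def regulus4 (A B C D : Subsp K) : Prop :=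
  (skew A B ∧ skew A C ∧ skew A D ∧ skew B C ∧ skew B D ∧ skew C D) ∧
  ∀ T : Subsp K, isLine T →
    ((meets T A → meets T B → meets T C → meets T D) ∧
     (meets T A → meets T B → meets T D → meets T C) ∧
     (meets T A → meets T C → meets T D → meets T B) ∧
     (meets T B → meets T C → meets T D → meets T A))

section Incidence

variable {V : Type*} [AddCommGroup V] [Module K V] [FiniteDimensional K V]

lemma Submodule.eq_of_le_of_ne_bot_of_finrank_le_one {p q : Submodule K V} (hpq : p ≤ q)
    (hp : p ≠ ⊥) (hq : Module.finrank K q ≤ 1) : p = q :=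
  eq_of_le_of_finrank_le hpq (hq.trans (one_le_finrank_iff.2 hp))

lemma finrank_inf_eq_one_of_ne {S T : Submodule K V} (hS : Module.finrank K S = 2)
    (hT : Module.finrank K T = 2) (hST : S ≠ T) (hmeet : S ⊓ T ≠ ⊥) :
    Module.finrank K ↥(S ⊓ T) = 1 := by
  have hlt : S ⊓ T < S := inf_le_left.lt_of_ne fun h =>
    hST (eq_of_le_of_finrank_le (inf_eq_left.1 h) (by rw [hS, hT]))
  have := finrank_lt_finrank_of_lt hlt
  have := one_le_finrank_iff.2 hmeet
  omega

lemma le_sup_or_inf_le_of_inf_ne_bot {S T X : Submodule K V}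
    (hST : Module.finrank K ↥(S ⊓ T) = 1) (hX : Module.finrank K X = 2)
    (hSX : S ⊓ X ≠ ⊥) (hTX : T ⊓ X ≠ ⊥) : X ≤ S ⊔ T ∨ S ⊓ T ≤ X := by
  refine or_iff_not_imp_left.2 fun hXP => ?_
  have hP : Module.finrank K ↥(X ⊓ (S ⊔ T)) ≤ 1 := by
    have := finrank_lt_finrank_of_lt (inf_le_left.lt_of_ne fun h => hXP (inf_eq_left.1 h))
    omega
  have hS' := eq_of_le_of_ne_bot_of_finrank_le_one (inf_le_inf_left X le_sup_left)
    (inf_comm S X ▸ hSX) hP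
  have hT' := eq_of_le_of_ne_bot_of_finrank_le_one (inf_le_inf_left X le_sup_right)
    (inf_comm T X ▸ hTX) hP
  have hpt : X ⊓ S ≤ S ⊓ T := le_inf inf_le_right (by rw [hS', ← hT']; exact inf_le_right)
  rw [← eq_of_le_of_ne_bot_of_finrank_le_one hpt (inf_comm S X ▸ hSX) hST.le]
  exact inf_le_left

lemma not_le_of_inf_eq_bot {X Y P : Submodule K V} (hX : Module.finrank K X = 2)
    (hY : Module.finrank K Y = 2) (hXY : X ⊓ Y = ⊥) (hP : Module.finrank K P ≤ 3)
    (hXP : X ≤ P) : ¬ Y ≤ P := by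
  intro hYP
  have := finrank_sup_add_finrank_inf_eq X Y
  have := finrank_mono (sup_le hXP hYP)
  rw [hXY, finrank_bot] at *
  omega

lemma inf_eq_bot_of_transversals {A B C S T : Submodule K V}
    (hA : Module.finrank K A = 2) (hB : Module.finrank K B = 2) (hC : Module.finrank K C = 2)
    (hS : Module.finrank K S = 2) (hT : Module.finrank K T = 2)
    (hAB : A ⊓ B = ⊥) (hAC : A ⊓ C = ⊥) (hBC : B ⊓ C = ⊥)
    (hSA : S ⊓ A ≠ ⊥) (hSB : S ⊓ B ≠ ⊥) (hSC : S ⊓ C ≠ ⊥)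
    (hTA : T ⊓ A ≠ ⊥) (hTB : T ⊓ B ≠ ⊥) (hTC : T ⊓ C ≠ ⊥) (hST : S ≠ T) :
    S ⊓ T = ⊥ := by
  by_contra hmeet
  have hpt := finrank_inf_eq_one_of_ne hS hT hST hmeet
  have hplane : Module.finrank K ↥(S ⊔ T) ≤ 3 := by
    have := finrank_sup_add_finrank_inf_eq S T
    omega
  have hpoint : ∀ {X Y : Submodule K V}, X ⊓ Y = ⊥ → S ⊓ T ≤ X → ¬ S ⊓ T ≤ Y :=
    fun hXY hX hY => hmeet (eq_bot_iff.2 (hXY ▸ le_inf hX hY))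
  -- each of `A, B, C` lies in the plane `S ⊔ T` or passes through the point `S ⊓ T`,
  -- and two skew lines cannot do the same
  rcases le_sup_or_inf_le_of_inf_ne_bot hpt hA hSA hTA with hA' | hA' <;>
    rcases le_sup_or_inf_le_of_inf_ne_bot hpt hB hSB hTB with hB' | hB'
  · exact not_le_of_inf_eq_bot hA hB hAB hplane hA' hB'
  · rcases le_sup_or_inf_le_of_inf_ne_bot hpt hC hSC hTC with hC' | hC'
    · exact not_le_of_inf_eq_bot hA hC hAC hplane hA' hC'
    · exact hpoint hBC hB' hC'
  · rcases le_sup_or_inf_le_of_inf_ne_bot hpt hC hSC hTC with hC' | hC'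
    · exact not_le_of_inf_eq_bot hB hC hBC hplane hB' hC'
    · exact hpoint hAC hA' hC'
  · exact hpoint hAB hA' hB'

end Incidence

section IsotropicTriangle

variable {M : Type*} [AddCommGroup M] [Module K M] {B : LinearMap.BilinForm K M}

variable (B) in
def IsIsotropicTriangle (v : Fin 3 → M) : Prop := ∀ i j, B (v i) (v j) = 0 ↔ i = j

lemma IsIsotropicTriangle.eq_zero_of_forall_apply_sum_eq_zero (hB : B.IsSymm) (h2 : (2 : K) ≠ 0)
    {v : Fin 3 → M} (hv : IsIsotropicTriangle B v) {g : Fin 3 → K}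
    (hg : ∀ j, B (v j) (∑ i, g i • v i) = 0) : g = 0 := by
  have hself : ∀ i, B (v i) (v i) = 0 := fun i => (hv i i).2 rfl
  have hp : B (v 0) (v 1) ≠ 0 := by rw [ne_eq, hv]; decide
  have hq : B (v 0) (v 2) ≠ 0 := by rw [ne_eq, hv]; decide
  have hr : B (v 1) (v 2) ≠ 0 := by rw [ne_eq, hv]; decide
  have e0 := hg 0
  have e1 := hg 1
  have e2 := hg 2
  simp only [Fin.sum_univ_three, map_add, map_smul, smul_eq_mul, hself, hB.eq (v 1) (v 0),
    hB.eq (v 2) (v 0), hB.eq (v 2) (v 1)] at e0 e1 e2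
  -- the Gram matrix of `v` has determinant `2 p q r`, with `p, q, r` its off-diagonal entries
  funext i
  fin_cases i
  · exact eq_zero_of_ne_zero_of_mul_left_eq_zero (by simp [*]) (by
      linear_combination B (v 0) (v 2) * e1 + B (v 0) (v 1) * e2 - B (v 1) (v 2) * e0 :
      2 * B (v 0) (v 1) * B (v 0) (v 2) * g 0 = 0)
  · exact eq_zero_of_ne_zero_of_mul_left_eq_zero (by simp [*]) (by
      linear_combination B (v 1) (v 2) * e0 + B (v 0) (v 1) * e2 - B (v 0) (v 2) * e1 :
      2 * B (v 0) (v 1) * B (v 1) (v 2) * g 1 = 0)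
  · exact eq_zero_of_ne_zero_of_mul_left_eq_zero (by simp [*]) (by
      linear_combination B (v 1) (v 2) * e0 + B (v 0) (v 2) * e1 - B (v 0) (v 1) * e2 :
      2 * B (v 0) (v 2) * B (v 1) (v 2) * g 2 = 0)

lemma IsIsotropicTriangle.mem_span_of_forall_apply_eq_zero [FiniteDimensional K M]
    (hM : Module.finrank K M = 6) (hB : B.IsSymm) (h2 : (2 : K) ≠ 0) {a t : Fin 3 → M}
    (ha : IsIsotropicTriangle B a) (ht : IsIsotropicTriangle B t)
    (hat : ∀ i j, B (t j) (a i) = 0) {d : M} (hd : ∀ j, B (t j) d = 0) :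
    d ∈ span K (Set.range a) := by
  have hcoeff : ∀ (g h : Fin 3 → K) (x : M), ∑ i, g i • a i + ∑ i, h i • t i = x →
      (∀ j, B (t j) x = 0) → h = 0 := by
    intro g h x hx hxt
    refine ht.eq_zero_of_forall_apply_sum_eq_zero hB h2 fun j => ?_
    simpa [← hx, map_sum, hat] using hxt j
  have hsum : ∀ c : Fin 3 ⊕ Fin 3 → K, ∑ i, c i • Sum.elim a t i =
      ∑ i, c (.inl i) • a i + ∑ i, c (.inr i) • t i := fun c => Fintype.sum_sum_type _
  have hindep : LinearIndependent K (Sum.elim a t) := by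
    refine Fintype.linearIndependent_iff.2 fun c hc => ?_
    rw [hsum] at hc
    have hct : ∀ i, c (.inr i) = 0 := congrFun (hcoeff _ _ 0 hc (by simp))
    simp only [hct, zero_smul, Finset.sum_const_zero, add_zero] at hc
    have hca : ∀ i, c (.inl i) = 0 :=
      congrFun (ha.eq_zero_of_forall_apply_sum_eq_zero hB h2 fun j => by rw [hc, map_zero])
    rintro (i | i)
    exacts [hca i, hct i]
  have hspan := hindep.span_eq_top_of_card_eq_finrank' (by simp [hM])
  obtain ⟨c, hc⟩ := (mem_span_range_iff_exists_fun K).1 (hspan ▸ mem_top : d ∈ span K _)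
  rw [hsum] at hc
  have hct : ∀ i, c (.inr i) = 0 := congrFun (hcoeff _ _ d hc hd)
  simp only [hct, zero_smul, Finset.sum_const_zero, add_zero] at hc
  exact (mem_span_range_iff_exists_fun K).2 ⟨_, hc⟩

end IsotropicTriangle

section Plucker

def pluckerCoords (u v : Fin 4 → K) : Fin 6 → K :=
  ![u 0 * v 1 - u 1 * v 0, u 0 * v 2 - u 2 * v 0, u 0 * v 3 - u 3 * v 0,
    u 1 * v 2 - u 2 * v 1, u 1 * v 3 - u 3 * v 1, u 2 * v 3 - u 3 * v 2]

def pluckerForm : LinearMap.BilinForm K (Fin 6 → K) :=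
  LinearMap.mk₂ K
    (fun p q => p 0 * q 5 - p 1 * q 4 + p 2 * q 3 + p 3 * q 2 - p 4 * q 1 + p 5 * q 0)
    (fun _ _ _ => by simp only [Pi.add_apply]; ring)
    (fun _ _ _ => by simp only [Pi.smul_apply, smul_eq_mul]; ring)
    (fun _ _ _ => by simp only [Pi.add_apply]; ring)
    (fun _ _ _ => by simp only [Pi.smul_apply, smul_eq_mul]; ring)

lemma pluckerForm_apply (p q : Fin 6 → K) :
    pluckerForm p q = p 0 * q 5 - p 1 * q 4 + p 2 * q 3 + p 3 * q 2 - p 4 * q 1 + p 5 * q 0 :=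
  rfl

lemma pluckerForm_isSymm : (pluckerForm (K := K)).IsSymm :=
  ⟨fun p q => by simp only [pluckerForm_apply]; ring⟩

lemma pluckerForm_pluckerCoords (u v w x : Fin 4 → K) :
    pluckerForm (pluckerCoords u v) (pluckerCoords w x) = (Matrix.of ![u, v, w, x]).det := by
  simp [Matrix.det_succ_row_zero, Fin.sum_univ_succ, pluckerForm_apply, pluckerCoords,
    Fin.succAbove]
  ring

lemma pluckerForm_pluckerCoords_self (u v : Fin 4 → K) :
    pluckerForm (pluckerCoords u v) (pluckerCoords u v) = 0 := by
  rw [pluckerForm_pluckerCoords]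
  exact Matrix.det_zero_of_row_eq (i := 0) (j := 2) (by decide) rfl

lemma exists_eq_span_pair {V : Type*} [AddCommGroup V] [Module K V] {L : Submodule K V}
    (hL : Module.finrank K L = 2) : ∃ u v : V, L = span K {u, v} := by
  have : Module.Finite K L := Module.finite_of_finrank_eq_succ hL
  let b := Module.finBasisOfFinrankEq K L hL
  have hb : Set.range b = {b 0, b 1} := by ext; simp [Fin.exists_fin_two, eq_comm]
  have h := congrArg (map L.subtype) b.span_eq
  rw [map_span, hb, Set.image_pair, Submodule.map_top, range_subtype] at h
  exact ⟨_, _, h.symm⟩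

lemma span_pair_inf_span_pair_eq_bot_iff {u v w x : Fin 4 → K}
    (hL : isLine (span K {u, v})) (hM : isLine (span K {w, x})) :
    span K {u, v} ⊓ span K {w, x} = ⊥ ↔ LinearIndependent K ![u, v, w, x] := by
  have hrank := finrank_sup_add_finrank_inf_eq (span K {u, v}) (span K {w, x})
  have hrange : Set.range ![u, v, w, x] = {u, v} ∪ {w, x} := by
    ext
    simp only [Matrix.range_cons, Matrix.range_empty, Set.mem_union, Set.mem_insert_iff,
      Set.mem_singleton_iff, Set.union_empty]
    tauto
  rw [hL, hM, ← span_union] at hrank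
  rw [linearIndependent_iff_card_eq_finrank_span, Fintype.card_fin, Set.finrank, hrange,
    ← finrank_eq_zero]
  omega

-- Determined by `L` only up to a nonzero scalar; `0` if `L` is not spanned by two vectors.
noncomputable def pluckerVec (L : Subsp K) : Fin 6 → K :=
  open Classical in
  if h : ∃ u v : Fin 4 → K, L = span K {u, v} then pluckerCoords h.choose h.choose_spec.choose
  else 0

lemma exists_pluckerVec_eq {L : Subsp K} (hL : isLine L) :
    ∃ u v, L = span K {u, v} ∧ pluckerVec L = pluckerCoords u v :=
  have h := exists_eq_span_pair hL
  ⟨_, _, h.choose_spec.choose_spec, dif_pos h⟩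

lemma skew_iff_pluckerForm_ne_zero {L M : Subsp K} (hL : isLine L) (hM : isLine M) :
    skew L M ↔ pluckerForm (pluckerVec L) (pluckerVec M) ≠ 0 := by
  obtain ⟨u, v, rfl, hLu⟩ := exists_pluckerVec_eq hL
  obtain ⟨w, x, rfl, hMw⟩ := exists_pluckerVec_eq hM
  rw [hLu, hMw, pluckerForm_pluckerCoords, skew, span_pair_inf_span_pair_eq_bot_iff hL hM,
    ← isUnit_iff_ne_zero, ← Matrix.isUnit_iff_isUnit_det,
    ← Matrix.linearIndependent_rows_iff_isUnit]
  rfl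

lemma meets_iff_pluckerForm_eq_zero {L M : Subsp K} (hL : isLine L) (hM : isLine M) :
    meets L M ↔ pluckerForm (pluckerVec L) (pluckerVec M) = 0 :=
  (skew_iff_pluckerForm_ne_zero hL hM).not_left

lemma isIsotropicTriangle_pluckerVec {L : Fin 3 → Subsp K} (hL : ∀ i, isLine (L i))
    (hLL : Pairwise fun i j => skew (L i) (L j)) :
    IsIsotropicTriangle pluckerForm fun i => pluckerVec (L i) := by
  intro i j
  rcases eq_or_ne i j with rfl | hij
  · simp only [iff_true]
    obtain ⟨u, v, -, h⟩ := exists_pluckerVec_eq (hL i)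
    rw [h, pluckerForm_pluckerCoords_self]
  · simpa [hij] using (skew_iff_pluckerForm_ne_zero (hL i) (hL j)).1 (hLL hij)

lemma meets_of_meets_of_transversals (h2 : (2 : K) ≠ 0) {P Q R S : Subsp K}
    (hP : isLine P) (hQ : isLine Q) (hR : isLine R) (hS : isLine S)
    (hPQ : skew P Q) (hPR : skew P R) (hQR : skew Q R)
    {t : Fin 3 → Subsp K} (ht : ∀ j, isLine (t j)) (htt : Pairwise fun i j => skew (t i) (t j))
    (htP : ∀ j, meets (t j) P) (htQ : ∀ j, meets (t j) Q) (htR : ∀ j, meets (t j) R)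
    (htS : ∀ j, meets (t j) S) {X : Subsp K} (hX : isLine X)
    (hXP : meets X P) (hXQ : meets X Q) (hXR : meets X R) : meets X S := by
  have hL : ∀ i, isLine (![P, Q, R] i) := by
    intro i; fin_cases i <;> assumption
  have hLL : Pairwise fun i j => skew (![P, Q, R] i) (![P, Q, R] j) := by
    intro i j hij
    fin_cases i <;> fin_cases j <;> simp_all [skew, inf_comm]
  have htL : ∀ i j, meets (t j) (![P, Q, R] i) := by
    intro i j; fin_cases i <;> simp [*]
  have hXL : ∀ i, meets X (![P, Q, R] i) := by
    intro i; fin_cases i <;> assumption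
  have hmem := (isIsotropicTriangle_pluckerVec hL hLL).mem_span_of_forall_apply_eq_zero
    (Module.finrank_fin_fun K) pluckerForm_isSymm h2 (isIsotropicTriangle_pluckerVec ht htt)
    (fun i j => (meets_iff_pluckerForm_eq_zero (ht j) (hL i)).1 (htL i j))
    (fun j => (meets_iff_pluckerForm_eq_zero (ht j) hS).1 (htS j))
  rw [meets_iff_pluckerForm_eq_zero hX hS]
  refine (span_le (p := LinearMap.ker (pluckerForm (pluckerVec X)))).2 ?_ hmem
  rintro _ ⟨i, rfl⟩
  exact (meets_iff_pluckerForm_eq_zero hX (hL i)).1 (hXL i)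

end Plucker

/-- Four pairwise skew lines admitting four pairwise distinct transversal
lines belong to a regulus. -/
theorem four_transversals_imply_regulus (h2 : (2 : K) ≠ 0)
    (A B C D : Subsp K) (hA : isLine A) (hB : isLine B) (hC : isLine C)
    (hD : isLine D)
    (hAB : skew A B) (hAC : skew A C) (hAD : skew A D)
    (hBC : skew B C) (hBD : skew B D) (hCD : skew C D)
    (T : Fin 4 → Subsp K) (hT : ∀ n, isLine (T n))
    (hTinj : Function.Injective T)
    (hTtrans : ∀ n, meets (T n) A ∧ meets (T n) B ∧
      meets (T n) C ∧ meets (T n) D) :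
    regulus4 A B C D := by
  let t (j : Fin 3) := T j.castSucc
  have ht : ∀ j, isLine (t j) := fun j => hT _
  have htA : ∀ j, meets (t j) A := fun j => (hTtrans _).1
  have htB : ∀ j, meets (t j) B := fun j => (hTtrans _).2.1
  have htC : ∀ j, meets (t j) C := fun j => (hTtrans _).2.2.1
  have htD : ∀ j, meets (t j) D := fun j => (hTtrans _).2.2.2
  have htt : Pairwise fun i j => skew (t i) (t j) := fun i j hij =>
    inf_eq_bot_of_transversals hA hB hC (ht i) (ht j) hAB hAC hBC (htA i) (htB i) (htC i)
      (htA j) (htB j) (htC j) (hTinj.ne (Fin.castSucc_injective 3 |>.ne hij))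
  refine ⟨⟨hAB, hAC, hAD, hBC, hBD, hCD⟩, fun X hX => ⟨?_, ?_, ?_, ?_⟩⟩
  · exact meets_of_meets_of_transversals h2 hA hB hC hD hAB hAC hBC ht htt htA htB htC htD hX
  · exact meets_of_meets_of_transversals h2 hA hB hD hC hAB hAD hBD ht htt htA htB htD htC hX
  · exact meets_of_meets_of_transversals h2 hA hC hD hB hAC hAD hCD ht htt htA htC htD htB hX
  · exact meets_of_meets_of_transversals h2 hB hC hD hA hBC hBD hCD ht htt htB htC htD htA hX
end

section
/- For a W-congruence A with pairwise skew lines in each elementary quadrilateral, the projection of A(i,j) onto A(i+1,j+1) from the center A(i+1,j) equals the projection of A(i,j) onto A(i+1,j+1) from the center A(i,j+1): i.e., for any point a ∈ A(i,j), the plane a ∨ A(i+1,j) and the plane a ∨ A(i,j+1) meet A(i+1,j+1) in the same point. -/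
open Submodule

variable {K : Type*} [Field K]

lemma finrank_pos_of_ne_bot {S : Subsp K} (h : S ≠ ⊥) : 0 < Module.finrank K ↥S :=
  Module.finrank_pos_iff.mpr (Submodule.nontrivial_iff_ne_bot.mpr h)

lemma ne_bot_of_finrank_pos' {S : Subsp K} (h : 0 < Module.finrank K ↥S) : S ≠ ⊥ := by
  intro hb; rw [hb, finrank_bot] at h; exact lt_irrefl 0 h

lemma sup_inf_dim {P Q : Subsp K} :
    Module.finrank K ↥(P ⊔ Q) + Module.finrank K ↥(P ⊓ Q)
      = Module.finrank K ↥P + Module.finrank K ↥Q :=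
  Submodule.finrank_sup_add_finrank_inf_eq P Q

lemma key (X B Y D : Subsp K) (hB : isLine B) (hY : isLine Y)
    (hXB : X ⊓ B = ⊥) (hXY : X ⊓ Y = ⊥) (hXD : X ⊓ D = ⊥) (hBY : B ⊓ Y = ⊥)
    (H : ∀ T : Subsp K, isLine T → meets T X → meets T B → meets T Y → meets T D)
    (a : Subsp K) (ha : isPoint a) (haX : a ≤ X) :
    (a ⊔ B) ⊓ Y ≤ (a ⊔ D) ⊓ Y := by
  have hfintop : Module.finrank K ↥(⊤ : Subsp K) = 4 := by
    rw [finrank_top]; simp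
  have haB : a ⊓ B = ⊥ := by
    rw [eq_bot_iff, ← hXB]; exact inf_le_inf_right B haX
  have hdim_aB : Module.finrank K ↥(a ⊔ B) = 3 := by
    have := sup_inf_dim (P := a) (Q := B)
    rw [haB, finrank_bot, ha, hB] at this; omega
  have hBYtop : B ⊔ Y = ⊤ := by
    apply Submodule.eq_top_of_finrank_eq
    have h4 : Module.finrank K (Fin 4 → K) = 4 := by simp
    have := sup_inf_dim (P := B) (Q := Y)
    rw [hBY, finrank_bot, hB, hY] at this; omega
  have hsuptop : (a ⊔ B) ⊔ Y = ⊤ := by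
    rw [eq_top_iff, ← hBYtop]
    exact sup_le (le_sup_left.trans (sup_le_sup_right le_sup_right Y)) le_sup_right
  have hdimy : Module.finrank K ↥((a ⊔ B) ⊓ Y) = 1 := by
    have := sup_inf_dim (P := a ⊔ B) (Q := Y)
    rw [hsuptop, hfintop, hdim_aB, hY] at this; omega
  have hay : a ⊓ ((a ⊔ B) ⊓ Y) = ⊥ := by
    rw [eq_bot_iff, ← hXY]
    exact inf_le_inf haX inf_le_right
  have hTline : isLine (a ⊔ ((a ⊔ B) ⊓ Y)) := by
    have := sup_inf_dim (P := a) (Q := (a ⊔ B) ⊓ Y)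
    rw [hay, finrank_bot, ha, hdimy] at this
    unfold isLine; omega
  have hane : a ≠ ⊥ := ne_bot_of_finrank_pos' (by rw [ha]; norm_num)
  have hTX : meets (a ⊔ ((a ⊔ B) ⊓ Y)) X := by
    intro hb
    exact hane (le_bot_iff.mp (hb ▸ le_inf le_sup_left haX))
  have hTleaB : a ⊔ ((a ⊔ B) ⊓ Y) ≤ a ⊔ B := sup_le le_sup_left inf_le_left
  have hTB : meets (a ⊔ ((a ⊔ B) ⊓ Y)) B := by
    intro hb
    have hd : Module.finrank K ↥((a ⊔ ((a ⊔ B) ⊓ Y)) ⊔ B) ≤ 3 := by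
      rw [← hdim_aB]; exact Submodule.finrank_mono (sup_le hTleaB le_sup_right)
    have := sup_inf_dim (P := a ⊔ ((a ⊔ B) ⊓ Y)) (Q := B)
    rw [hb, finrank_bot, hTline, hB] at this; omega
  have hyne : (a ⊔ B) ⊓ Y ≠ ⊥ := ne_bot_of_finrank_pos' (by rw [hdimy]; norm_num)
  have hTY : meets (a ⊔ ((a ⊔ B) ⊓ Y)) Y := by
    intro hb
    exact hyne (le_bot_iff.mp (hb ▸ le_inf le_sup_right inf_le_right))
  have hTD : meets (a ⊔ ((a ⊔ B) ⊓ Y)) D := H _ hTline hTX hTB hTY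
  have haTD : a ⊓ ((a ⊔ ((a ⊔ B) ⊓ Y)) ⊓ D) = ⊥ := by
    rw [eq_bot_iff, ← hXD]
    exact inf_le_inf haX inf_le_right
  have hdTD : 0 < Module.finrank K ↥((a ⊔ ((a ⊔ B) ⊓ Y)) ⊓ D) :=
    finrank_pos_of_ne_bot hTD
  have hge : Module.finrank K ↥(a ⊔ ((a ⊔ B) ⊓ Y))
      ≤ Module.finrank K ↥(a ⊔ ((a ⊔ ((a ⊔ B) ⊓ Y)) ⊓ D)) := by
    have h1 := sup_inf_dim (P := a) (Q := (a ⊔ ((a ⊔ B) ⊓ Y)) ⊓ D)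
    rw [haTD, finrank_bot, ha] at h1
    rw [hTline]; omega
  have hTeq : a ⊔ ((a ⊔ ((a ⊔ B) ⊓ Y)) ⊓ D) = a ⊔ ((a ⊔ B) ⊓ Y) :=
    Submodule.eq_of_le_of_finrank_le (sup_le le_sup_left inf_le_left) hge
  refine le_inf ?_ inf_le_right
  calc (a ⊔ B) ⊓ Y ≤ a ⊔ ((a ⊔ B) ⊓ Y) := le_sup_right
    _ = a ⊔ ((a ⊔ ((a ⊔ B) ⊓ Y)) ⊓ D) := hTeq.symm
    _ ≤ a ⊔ D := sup_le_sup_left inf_le_right a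

/-- On a W-congruence, projecting a point of A(i,j) onto A(i+1,j+1) from the
center A(i+1,j) gives the same point as projecting from the center A(i,j+1). -/
theorem W_congruence_diagonal_projections_agree (h2 : (2 : K) ≠ 0)
    (A : ℤ → ℤ → Subsp K) (hline : ∀ i j, isLine (A i j))
    (hW : ∀ i j, regulus4 (A i j) (A (i+1) j) (A (i+1) (j+1)) (A i (j+1))) :
    ∀ i j : ℤ, ∀ a : Subsp K, isPoint a → a ≤ A i j →
      (a ⊔ A (i+1) j) ⊓ A (i+1) (j+1) = (a ⊔ A i (j+1)) ⊓ A (i+1) (j+1) := by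
  intro i j a ha haX
  obtain ⟨⟨sAB, sAC, sAD, sBC, sBD, sCD⟩, hreg⟩ := hW i j
  apply le_antisymm
  · exact key (A i j) (A (i+1) j) (A (i+1) (j+1)) (A i (j+1))
      (hline _ _) (hline _ _) sAB sAC sAD sBC
      (fun T hT h1 h2 h3 => (hreg T hT).1 h1 h2 h3) a ha haX
  · refine key (A i j) (A i (j+1)) (A (i+1) (j+1)) (A (i+1) j)
      (hline _ _) (hline _ _) sAD sAC sAB ?_ 
      (fun T hT h1 h2 h3 => (hreg T hT).2.2.1 h1 h3 h2) a ha haX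
    rw [inf_comm]; exact sCD
end

section
/- Let f and g be asymptotically related discrete nets. Then the quadruples (a₀,a₁,a₂,a₃) = (f(0,0), f(1,0), g(0,1), g(1,1)) and (b₀,b₁,b₂,b₃) = (f(1,1), f(0,1), g(1,0), g(0,0)) form a pair of Möbius tetrahedra: for every choice of pairwise different indices i,j,k,l ∈ {0,1,2,3}, the point aᵢ lies in the plane bⱼ ∨ bₖ ∨ bₗ, and bᵢ lies in the plane aⱼ ∨ aₖ ∨ aₗ. -/
open Submodule

variable {K : Type*} [Field K]

def asympRel (f g : ℤ → ℤ → Subsp K) : Prop :=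
  ∀ i j, Pi1 f i j = Pi2 g i j ∧ Pi2 f i j = Pi1 g i j
def Ax (f g : ℤ → ℤ → Subsp K) (i j : ℤ) : Subsp K := f i j ⊔ g i j

/- Auxiliary lemmas -/

lemma sup_rank_le (S T : Subsp K) :
    Module.finrank K ↥(S ⊔ T) ≤ Module.finrank K ↥S + Module.finrank K ↥T := by
  have := Submodule.finrank_sup_add_finrank_inf_eq S T
  omega

lemma rank_le3 {X Y Z : Subsp K} (hx : isPoint X) (hy : isPoint Y) (hz : isPoint Z) :
    Module.finrank K ↥(X ⊔ Y ⊔ Z) ≤ 3 := by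
  have h1 := sup_rank_le (K := K) X Y
  have h2 := sup_rank_le (K := K) (X ⊔ Y) Z
  unfold isPoint at hx hy hz
  omega

/-- If a subspace `S` of dimension 3 is contained in `P` of dimension ≤ 3,
and `W ≤ P`, then `W ≤ S`. -/
lemma cover {P S W : Subsp K} (hs : S ≤ P) (hw : W ≤ P)
    (hP : Module.finrank K ↥P ≤ 3) (hS : Module.finrank K ↥S = 3) : W ≤ S := by
  have : S = P := Submodule.eq_of_le_of_finrank_le hs (hP.trans hS.ge)
  exact this ▸ hw

lemma biSup_ne (v : Fin 4 → Subsp K) (i j k l : Fin 4)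
    (hj : j ≠ i) (hk : k ≠ i) (hl : l ≠ i)
    (hall : ∀ m : Fin 4, m ≠ i → m = j ∨ m = k ∨ m = l) :
    (⨆ m ∈ ({m | m ≠ i} : Set (Fin 4)), v m) = v j ⊔ v k ⊔ v l := by
  apply le_antisymm
  · refine iSup₂_le fun m hm => ?_
    rcases hall m hm with rfl | rfl | rfl
    · exact le_sup_left.trans le_sup_left
    · exact le_sup_right.trans le_sup_left
    · exact le_sup_right
  · refine sup_le (sup_le ?_ ?_) ?_ <;> exact le_iSup₂ (f := fun m _ => v m) _ ‹_›

/-- The quadruples (f(0,0), f(1,0), g(0,1), g(1,1)) and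
(f(1,1), f(0,1), g(1,0), g(0,0)) of a pair of asymptotically related nets
form a pair of Möbius tetrahedra. -/
theorem asymptotic_transforms_give_moebius_tetrahedra (h2 : (2 : K) ≠ 0)
    (f g : ℤ → ℤ → Subsp K) (hf : isNet f) (hg : isNet g)
    (hasy : asympRel f g)
    (a b : Fin 4 → Subsp K)
    (ha : a = ![f 0 0, f 1 0, g 0 1, g 1 1])
    (hb : b = ![f 1 1, f 0 1, g 1 0, g 0 0])
    (hpa : ∀ i : Fin 4, isPlane (⨆ j ∈ ({j | j ≠ i} : Set (Fin 4)), a j))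
    (hpb : ∀ i : Fin 4, isPlane (⨆ j ∈ ({j | j ≠ i} : Set (Fin 4)), b j)) :
    ∀ i : Fin 4,
      a i ≤ (⨆ j ∈ ({j | j ≠ i} : Set (Fin 4)), b j) ∧
      b i ≤ (⨆ j ∈ ({j | j ≠ i} : Set (Fin 4)), a j) := by
  subst ha hb
  have mid1 : ∀ (h : ℤ → ℤ → Subsp K) i j, h i j ≤ Pi1 h i j := fun h i j =>
    le_sup_right.trans le_sup_left
  have mid2 : ∀ (h : ℤ → ℤ → Subsp K) i j, h i j ≤ Pi2 h i j := fun h i j =>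
    le_sup_right.trans le_sup_left
  have lo1 : ∀ (h : ℤ → ℤ → Subsp K) i j i', i' = i - 1 → h i' j ≤ Pi1 h i j :=
    fun h i j i' e => e ▸ (le_sup_left.trans le_sup_left : h (i-1) j ≤ Pi1 h i j)
  have hi1 : ∀ (h : ℤ → ℤ → Subsp K) i j i', i' = i + 1 → h i' j ≤ Pi1 h i j :=
    fun h i j i' e => e ▸ (le_sup_right : h (i+1) j ≤ Pi1 h i j)
  have lo2 : ∀ (h : ℤ → ℤ → Subsp K) i j j', j' = j - 1 → h i j' ≤ Pi2 h i j :=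
    fun h i j j' e => e ▸ (le_sup_left.trans le_sup_left : h i (j-1) ≤ Pi2 h i j)
  have hi2 : ∀ (h : ℤ → ℤ → Subsp K) i j j', j' = j + 1 → h i j' ≤ Pi2 h i j :=
    fun h i j j' e => e ▸ (le_sup_right : h i (j+1) ≤ Pi2 h i j)
  have r1 : ∀ i j, Module.finrank K ↥(Pi1 f i j) ≤ 3 := fun i j =>
    rank_le3 (hf _ _) (hf _ _) (hf _ _)
  have r2 : ∀ i j, Module.finrank K ↥(Pi2 f i j) ≤ 3 := fun i j =>
    rank_le3 (hf _ _) (hf _ _) (hf _ _)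
  intro i
  fin_cases i <;> refine ⟨?_, ?_⟩ <;> simp only [Fin.zero_eta, Fin.mk_one, Fin.reduceFinMk, Fin.isValue]
  · rw [biSup_ne _ 0 1 2 3 (by decide) (by decide) (by decide) (by decide)]
    have hp := hpb 0
    rw [biSup_ne _ 0 1 2 3 (by decide) (by decide) (by decide) (by decide)] at hp
    unfold isPlane at hp
    simp only [Matrix.cons_val_zero, Matrix.cons_val_one, Matrix.head_cons, Matrix.cons_val_two, Matrix.tail_cons, Matrix.cons_val_three] at hp ⊢
    exact cover (sup_le (sup_le (hi2 f 0 0 1 (by norm_num)) ((hi1 g 0 0 1 (by norm_num)).trans (hasy 0 0).2.ge)) ((mid1 g 0 0).trans (hasy 0 0).2.ge)) (mid2 f 0 0) (r2 0 0) hp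
  · rw [biSup_ne _ 0 1 2 3 (by decide) (by decide) (by decide) (by decide)]
    have hp := hpa 0
    rw [biSup_ne _ 0 1 2 3 (by decide) (by decide) (by decide) (by decide)] at hp
    unfold isPlane at hp
    simp only [Matrix.cons_val_zero, Matrix.cons_val_one, Matrix.head_cons, Matrix.cons_val_two, Matrix.tail_cons, Matrix.cons_val_three] at hp ⊢
    exact cover (sup_le (sup_le (lo2 f 1 1 0 (by norm_num)) ((lo1 g 1 1 0 (by norm_num)).trans (hasy 1 1).2.ge)) ((mid1 g 1 1).trans (hasy 1 1).2.ge)) (mid2 f 1 1) (r2 1 1) hp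
  · rw [biSup_ne _ 1 0 2 3 (by decide) (by decide) (by decide) (by decide)]
    have hp := hpb 1
    rw [biSup_ne _ 1 0 2 3 (by decide) (by decide) (by decide) (by decide)] at hp
    unfold isPlane at hp
    simp only [Matrix.cons_val_zero, Matrix.cons_val_one, Matrix.head_cons, Matrix.cons_val_two, Matrix.tail_cons, Matrix.cons_val_three] at hp ⊢
    exact cover (sup_le (sup_le (hi2 f 1 0 1 (by norm_num)) ((mid1 g 1 0).trans (hasy 1 0).2.ge)) ((lo1 g 1 0 0 (by norm_num)).trans (hasy 1 0).2.ge)) (mid2 f 1 0) (r2 1 0) hp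
  · rw [biSup_ne _ 1 0 2 3 (by decide) (by decide) (by decide) (by decide)]
    have hp := hpa 1
    rw [biSup_ne _ 1 0 2 3 (by decide) (by decide) (by decide) (by decide)] at hp
    unfold isPlane at hp
    simp only [Matrix.cons_val_zero, Matrix.cons_val_one, Matrix.head_cons, Matrix.cons_val_two, Matrix.tail_cons, Matrix.cons_val_three] at hp ⊢
    exact cover (sup_le (sup_le (lo2 f 0 1 0 (by norm_num)) ((mid1 g 0 1).trans (hasy 0 1).2.ge)) ((hi1 g 0 1 1 (by norm_num)).trans (hasy 0 1).2.ge)) (mid2 f 0 1) (r2 0 1) hp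
  · rw [biSup_ne _ 2 0 1 3 (by decide) (by decide) (by decide) (by decide)]
    have hp := hpb 2
    rw [biSup_ne _ 2 0 1 3 (by decide) (by decide) (by decide) (by decide)] at hp
    unfold isPlane at hp
    simp only [Matrix.cons_val_zero, Matrix.cons_val_one, Matrix.head_cons, Matrix.cons_val_two, Matrix.tail_cons, Matrix.cons_val_three] at hp ⊢
    exact cover (sup_le (sup_le (hi1 f 0 1 1 (by norm_num)) (mid1 f 0 1)) ((lo2 g 0 1 0 (by norm_num)).trans (hasy 0 1).1.ge)) ((mid2 g 0 1).trans (hasy 0 1).1.ge) (r1 0 1) hp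
  · rw [biSup_ne _ 2 0 1 3 (by decide) (by decide) (by decide) (by decide)]
    have hp := hpa 2
    rw [biSup_ne _ 2 0 1 3 (by decide) (by decide) (by decide) (by decide)] at hp
    unfold isPlane at hp
    simp only [Matrix.cons_val_zero, Matrix.cons_val_one, Matrix.head_cons, Matrix.cons_val_two, Matrix.tail_cons, Matrix.cons_val_three] at hp ⊢
    exact cover (sup_le (sup_le (lo1 f 1 0 0 (by norm_num)) (mid1 f 1 0)) ((hi2 g 1 0 1 (by norm_num)).trans (hasy 1 0).1.ge)) ((mid2 g 1 0).trans (hasy 1 0).1.ge) (r1 1 0) hp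
  · rw [biSup_ne _ 3 0 1 2 (by decide) (by decide) (by decide) (by decide)]
    have hp := hpb 3
    rw [biSup_ne _ 3 0 1 2 (by decide) (by decide) (by decide) (by decide)] at hp
    unfold isPlane at hp
    simp only [Matrix.cons_val_zero, Matrix.cons_val_one, Matrix.head_cons, Matrix.cons_val_two, Matrix.tail_cons, Matrix.cons_val_three] at hp ⊢
    exact cover (sup_le (sup_le (mid1 f 1 1) (lo1 f 1 1 0 (by norm_num))) ((lo2 g 1 1 0 (by norm_num)).trans (hasy 1 1).1.ge)) ((mid2 g 1 1).trans (hasy 1 1).1.ge) (r1 1 1) hp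
  · rw [biSup_ne _ 3 0 1 2 (by decide) (by decide) (by decide) (by decide)]
    have hp := hpa 3
    rw [biSup_ne _ 3 0 1 2 (by decide) (by decide) (by decide) (by decide)] at hp
    unfold isPlane at hp
    simp only [Matrix.cons_val_zero, Matrix.cons_val_one, Matrix.head_cons, Matrix.cons_val_two, Matrix.tail_cons, Matrix.cons_val_three] at hp ⊢
    exact cover (sup_le (sup_le (mid1 f 0 0) (hi1 f 0 0 1 (by norm_num))) ((hi2 g 0 0 1 (by norm_num)).trans (hasy 0 0).1.ge)) ((mid2 g 0 0).trans (hasy 0 0).1.ge) (r1 0 0) hp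
end

section
/- On a W-congruence A, the construction of f(i+2,j+2) from f(i,j) is path-independent: composing the projection A(i,j) → A(i+2,j) with center A(i+1,j) and then A(i+2,j) → A(i+2,j+2) with center A(i+2,j+1) gives the same map as composing A(i,j) → A(i,j+2) with center A(i,j+1) and then A(i,j+2) → A(i+2,j+2) with center A(i+1,j+2). -/
open Submodule

variable {K : Type*} [Field K]

private lemma skew_symm {L M : Subsp K} (h : skew L M) : skew M L := by
  show M ⊓ L = ⊥
  rw [inf_comm]
  exact h

private lemma inf_bot_of_le {p X Y : Subsp K} (h : p ≤ X) (hXY : skew X Y) :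
    p ⊓ Y = ⊥ :=
  le_bot_iff.mp (le_trans (inf_le_inf_right Y h) (le_of_eq (hXY : X ⊓ Y = ⊥)))

private lemma finrank_pt_sup_line {p C : Subsp K} (hp : isPoint p) (hC : isLine C)
    (h : p ⊓ C = ⊥) : Module.finrank K ↥(p ⊔ C) = 3 := by
  have h1 := Submodule.finrank_sup_add_finrank_inf_eq p C
  have hp' : Module.finrank K ↥p = 1 := hp
  have hC' : Module.finrank K ↥C = 2 := hC
  rw [h, hp', hC', finrank_bot] at h1
  omega

private lemma sup_eq_top_of_skew {C Y : Subsp K} (hC : isLine C) (hY : isLine Y)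
    (h : skew C Y) : C ⊔ Y = ⊤ := by
  apply Submodule.eq_top_of_finrank_eq
  have h1 := Submodule.finrank_sup_add_finrank_inf_eq C Y
  have h' : C ⊓ Y = ⊥ := h
  have hC' : Module.finrank K ↥C = 2 := hC
  have hY' : Module.finrank K ↥Y = 2 := hY
  rw [h', hC', hY', finrank_bot] at h1
  have h4 : Module.finrank K (Fin 4 → K) = 4 := by simp
  omega

private lemma proj_isPoint {p C Y : Subsp K} (hp : isPoint p) (hC : isLine C)
    (hY : isLine Y) (hpC : p ⊓ C = ⊥) (hCY : skew C Y) :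
    isPoint ((p ⊔ C) ⊓ Y) := by
  have h3 : Module.finrank K ↥(p ⊔ C) = 3 := finrank_pt_sup_line hp hC hpC
  have htop : (p ⊔ C) ⊔ Y = ⊤ := by
    rw [sup_assoc, sup_eq_top_of_skew hC hY hCY, sup_top_eq]
  have h1 := Submodule.finrank_sup_add_finrank_inf_eq (p ⊔ C) Y
  rw [htop] at h1
  have hY' : Module.finrank K ↥Y = 2 := hY
  have h4 : Module.finrank K ↥(⊤ : Subsp K) = 4 := by simp
  show Module.finrank K ↥((p ⊔ C) ⊓ Y) = 1
  omega

private lemma pt_sup_eq {q C P : Subsp K} (hq : isPoint q) (hC : isLine C)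
    (hP : Module.finrank K ↥P = 3) (hqP : q ≤ P) (hCP : C ≤ P) (hqC : q ⊓ C = ⊥) :
    q ⊔ C = P :=
  Submodule.eq_of_le_of_finrank_eq (sup_le hqP hCP)
    (by rw [finrank_pt_sup_line hq hC hqC, hP])

/-- On a W-congruence, the construction of a point of A(i+2,j+2) from a point
of A(i,j) by two successive projections is path-independent. -/
theorem W_congruence_path_independence (h2 : (2 : K) ≠ 0)
    (A : ℤ → ℤ → Subsp K) (hline : ∀ i j, isLine (A i j))
    (hquadskew : ∀ i j,
      skew (A i j) (A (i+1) j) ∧ skew (A i j) (A (i+1) (j+1)) ∧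
      skew (A i j) (A i (j+1)) ∧ skew (A (i+1) j) (A (i+1) (j+1)) ∧
      skew (A (i+1) j) (A i (j+1)) ∧ skew (A (i+1) (j+1)) (A i (j+1)))
    (hlongskew : ∀ i j, skew (A i j) (A (i+2) j) ∧ skew (A i j) (A i (j+2)))
    (hW1 : ∀ i j, ∀ p : Subsp K, isPoint p → p ≤ A i j →
      (p ⊔ A (i+1) j) ⊓ A (i+1) (j+1) = (p ⊔ A i (j+1)) ⊓ A (i+1) (j+1))
    (hW2 : ∀ i j, ∀ p : Subsp K, isPoint p → p ≤ A (i+1) j →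
      (p ⊔ A i j) ⊓ A i (j+1) = (p ⊔ A (i+1) (j+1)) ⊓ A i (j+1)) :
    ∀ i j : ℤ, ∀ p : Subsp K, isPoint p → p ≤ A i j →
      ((((p ⊔ A (i+1) j) ⊓ A (i+2) j) ⊔ A (i+2) (j+1)) ⊓ A (i+2) (j+2)) =
      ((((p ⊔ A i (j+1)) ⊓ A i (j+2)) ⊔ A (i+1) (j+2)) ⊓ A (i+2) (j+2)) := by
  intro i j p hp hpA
  have e1 : i + 1 + 1 = i + 2 := by ring
  have e2 : j + 1 + 1 = j + 2 := by ring
  obtain ⟨s1, s2, s3, s4, s5, s6⟩ := hquadskew i j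
  obtain ⟨t1, t2, t3, t4, t5, t6⟩ := hquadskew (i+1) j
  obtain ⟨u1, u2, u3, u4, u5, u6⟩ := hquadskew i (j+1)
  have w1 := (hquadskew i (j+2)).1
  have hW1a := hW1 i j
  have hW1b := hW1 (i+1) (j+1)
  have hW2a := hW2 (i+1) j
  have hW2b := hW2 i (j+1)
  simp only [e1] at t1 t2 t4 t5 t6 hW2a hW1b
  simp only [e2] at u2 u3 u4 u5 u6 hW2b hW1b
  set L10 := A (i+1) j with hL10d
  set L20 := A (i+2) j with hL20d
  set L01 := A i (j+1) with hL01d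
  set L11 := A (i+1) (j+1) with hL11d
  set L21 := A (i+2) (j+1) with hL21d
  set L02 := A i (j+2) with hL02d
  set L12 := A (i+1) (j+2) with hL12d
  set L22 := A (i+2) (j+2) with hL22d
  have hL10 := hline (i+1) j
  have hL20 := hline (i+2) j
  have hL01 := hline i (j+1)
  have hL11 := hline (i+1) (j+1)
  have hL21 := hline (i+2) (j+1)
  have hL02 := hline i (j+2)
  have hL12 := hline (i+1) (j+2)
  -- q : the common diagonal point on L11
  have hqpt : isPoint ((p ⊔ L10) ⊓ L11) :=
    proj_isPoint hp hL10 hL11 (inf_bot_of_le hpA s1) s4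
  set q := (p ⊔ L10) ⊓ L11 with hqdef
  have hqle11 : q ≤ L11 := inf_le_right
  -- x : first projection along the bottom
  have hxpt : isPoint ((p ⊔ L10) ⊓ L20) :=
    proj_isPoint hp hL10 hL20 (inf_bot_of_le hpA s1) t1
  set x := (p ⊔ L10) ⊓ L20 with hxdef
  have hxle : x ≤ L20 := inf_le_right
  have hP1 : Module.finrank K ↥(p ⊔ L10) = 3 :=
    finrank_pt_sup_line hp hL10 (inf_bot_of_le hpA s1)
  have hx10 : x ⊔ L10 = p ⊔ L10 :=
    pt_sup_eq hxpt hL10 hP1 inf_le_left le_sup_right (inf_bot_of_le hxle (skew_symm t1))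
  have hq_x : q = (x ⊔ L21) ⊓ L11 := by
    rw [hqdef, ← hx10]
    exact hW2a x hxpt hxle
  have hx21 : Module.finrank K ↥(x ⊔ L21) = 3 :=
    finrank_pt_sup_line hxpt hL21 (inf_bot_of_le hxle t4)
  have hq21 : q ⊔ L21 = x ⊔ L21 :=
    pt_sup_eq hqpt hL21 hx21 (by rw [hq_x]; exact inf_le_left) le_sup_right
      (inf_bot_of_le hqle11 (skew_symm t6))
  -- y : first projection along the left side
  have hq_alt : q = (p ⊔ L01) ⊓ L11 := hW1a p hp hpA
  have hP2 : Module.finrank K ↥(p ⊔ L01) = 3 :=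
    finrank_pt_sup_line hp hL01 (inf_bot_of_le hpA s3)
  have hq01 : q ⊔ L01 = p ⊔ L01 :=
    pt_sup_eq hqpt hL01 hP2 (by rw [hq_alt]; exact inf_le_left) le_sup_right
      (inf_bot_of_le hqle11 s6)
  have hypt : isPoint ((p ⊔ L01) ⊓ L02) :=
    proj_isPoint hp hL01 hL02 (inf_bot_of_le hpA s3) u3
  set y := (p ⊔ L01) ⊓ L02 with hydef
  have hyle : y ≤ L02 := inf_le_right
  have hy_q : y = (q ⊔ L12) ⊓ L02 := by
    rw [hydef, ← hq01]
    exact hW2b q hqpt hqle11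
  have hq12 : Module.finrank K ↥(q ⊔ L12) = 3 :=
    finrank_pt_sup_line hqpt hL12 (inf_bot_of_le hqle11 u4)
  have hy12 : y ⊔ L12 = q ⊔ L12 :=
    pt_sup_eq hypt hL12 hq12 (by rw [hy_q]; exact inf_le_left) le_sup_right
      (inf_bot_of_le hyle w1)
  -- conclude via the W-property of the quadrilateral at (i+1, j+1)
  rw [← hq21, hy12]
  exact hW1b q hqpt hqle11
end

section
/- Let Q be a doubly ruled quadric in P³ containing pairwise skew lines A(0,0), A(1,0), A(0,1) of one ruling family. For any point p on Q not on these lines there is a unique line B of the other ruling family through p, and B meets A(0,0) in a point b. The map p ↦ b has the property: two points p ∈ C₁ and q ∈ C₂ (on plane sections C₁, C₂ of Q) correspond under the projection from center A(0,1) (i.e., q = (p ∨ A(0,1)) ∩ C₂ appropriately interpreted) if and only if they determine the same point b on A(0,0). -/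
open Submodule

variable {K : Type*} [Field K]

/-- Lines meeting the three lines A, B, C. -/
def transv3 (A B C : Subsp K) : Set (Subsp K) :=
  {T | isLine T ∧ meets T A ∧ meets T B ∧ meets T C}

/-- The regulus spanned by the three pairwise skew lines A, B, C: all lines
meeting every common transversal of A, B, C. -/
def reg3 (A B C : Subsp K) : Set (Subsp K) :=
  {L | isLine L ∧ ∀ T ∈ transv3 A B C, meets L T}

/-- The points of the doubly ruled quadric through A, B, C. -/
def quadPts (A B C : Subsp K) : Set (Subsp K) :=
  {p | isPoint p ∧ ∃ L ∈ reg3 A B C, p ≤ L}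

/-! Choose coordinates `V ≅ W × W`, with `W` a plane, in which `A00` and `A10` are the two axes
and `A01` is the diagonal; this is possible because `A01` is the graph of an isomorphism
`A00 ≃ A10`. The common transversals of the three lines are then exactly the lines `P × P` for
`P` a point of `W`, and two of them meet only if they coincide. A line meeting all of them
consists of vectors `(l • X, m • X)` for a fixed `(l, m)`, so every point of the quadric lies on
some `P × P`. Finally `P × P` meets `A00` in `P × 0`, and for `p ≤ P × P` off the diagonal the
plane `p ⊔ A01` is the preimage of `P` under `(x, y) ↦ x - y`, so it contains a point
`q ≤ Q × Q` off the diagonal exactly when `Q = P`. -/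

open Module

section TwoDisjoint

variable {V : Type*} [AddCommGroup V] [Module K V] [FiniteDimensional K V]
  {L A B : Submodule K V}

theorem finrank_inf_eq_one_of_finrank_eq_two (hL : finrank K L = 2) (hAB : A ⊓ B = ⊥)
    (hA : L ⊓ A ≠ ⊥) (hB : L ⊓ B ≠ ⊥) : finrank K ↥(L ⊓ A) = 1 := by
  have hsum := finrank_sup_add_finrank_inf_eq (L ⊓ A) (L ⊓ B)
  have hle : finrank K ↥(L ⊓ A ⊔ L ⊓ B) ≤ 2 := hL ▸ finrank_mono (sup_le inf_le_left inf_le_left)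
  have hA₀ : finrank K ↥(L ⊓ A) ≠ 0 := mt finrank_eq_zero.1 hA
  have hB₀ : finrank K ↥(L ⊓ B) ≠ 0 := mt finrank_eq_zero.1 hB
  rw [← inf_inf_distrib_left, hAB, inf_bot_eq, finrank_bot] at hsum
  omega

theorem inf_sup_inf_eq_of_finrank_eq_two (hL : finrank K L = 2) (hAB : A ⊓ B = ⊥)
    (hA : L ⊓ A ≠ ⊥) (hB : L ⊓ B ≠ ⊥) : L ⊓ A ⊔ L ⊓ B = L := by
  refine eq_of_le_of_finrank_eq (sup_le inf_le_left inf_le_left) ?_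
  have hsum := finrank_sup_add_finrank_inf_eq (L ⊓ A) (L ⊓ B)
  rw [← inf_inf_distrib_left, hAB, inf_bot_eq, finrank_bot,
    finrank_inf_eq_one_of_finrank_eq_two hL hAB hA hB,
    finrank_inf_eq_one_of_finrank_eq_two hL (inf_comm A B ▸ hAB) hB hA] at hsum
  omega

end TwoDisjoint

section Model

variable {W : Type*} [AddCommGroup W] [Module K W]

theorem Submodule.finrank_prod {M N : Type*} [AddCommGroup M] [Module K M] [AddCommGroup N]
    [Module K N] (P : Submodule K M) (Q : Submodule K N) [FiniteDimensional K P]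
    [FiniteDimensional K Q] : finrank K (P.prod Q) = finrank K P + finrank K Q := by
  let e : P.prod Q ≃ₗ[K] P × Q :=
    { toFun x := (⟨x.1.1, (mem_prod.1 x.2).1⟩, ⟨x.1.2, (mem_prod.1 x.2).2⟩)
      invFun y := ⟨(y.1, y.2), mem_prod.2 ⟨y.1.2, y.2.2⟩⟩
      map_add' _ _ := rfl
      map_smul' _ _ := rfl
      left_inv _ := rfl
      right_inv _ := rfl }
  rw [e.finrank_eq, Module.finrank_prod]

theorem Submodule.prod_bot_inj {P Q : Submodule K W} :
    P.prod (⊥ : Submodule K W) = Q.prod ⊥ ↔ P = Q :=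
  ⟨fun h => by ext x; simpa using SetLike.ext_iff.1 h (x, 0), fun h => h ▸ rfl⟩

variable (K W) in
def prodDiagonal : Submodule K (W × W) :=
  LinearMap.ker (LinearMap.fst K W W - LinearMap.snd K W W)

@[simp]
theorem mem_prodDiagonal {v : W × W} : v ∈ prodDiagonal K W ↔ v.1 = v.2 := by
  simp [prodDiagonal, sub_eq_zero]

theorem isAtom_span_singleton {x : W} (hx : x ≠ 0) : IsAtom (K ∙ x) :=
  isAtom_iff_finrank_eq_one.2 (finrank_span_singleton hx)

theorem IsAtom.finiteDimensional {P : Submodule K W} (hP : IsAtom P) : FiniteDimensional K P :=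
  .of_finrank_pos (by rw [isAtom_iff_finrank_eq_one.1 hP]; omega)

theorem IsAtom.finrank_prod_self {P : Submodule K W} (hP : IsAtom P) :
    finrank K (P.prod P) = 2 := by
  have := hP.finiteDimensional
  rw [Submodule.finrank_prod, isAtom_iff_finrank_eq_one.1 hP]

theorem IsAtom.finrank_prod_bot {P : Submodule K W} (hP : IsAtom P) :
    finrank K (P.prod (⊥ : Submodule K W)) = 1 := by
  have := hP.finiteDimensional
  rw [Submodule.finrank_prod, isAtom_iff_finrank_eq_one.1 hP, finrank_bot]

theorem IsAtom.eq_of_prod_self_inf_ne_bot {P Q : Submodule K W} (hP : IsAtom P) (hQ : IsAtom Q)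
    (h : P.prod P ⊓ Q.prod Q ≠ ⊥) : P = Q := by
  by_contra hPQ
  rw [prod_inf_prod, disjoint_iff.1 (hP.disjoint_of_ne hQ hPQ), prod_bot] at h
  exact h rfl

theorem exists_isAtom_eq_prod_self_iff [FiniteDimensional K W] {T : Submodule K (W × W)} :
    (∃ P : Submodule K W, IsAtom P ∧ T = P.prod P) ↔ finrank K T = 2 ∧
      T ⊓ (⊤ : Submodule K W).prod ⊥ ≠ ⊥ ∧ T ⊓ (⊥ : Submodule K W).prod ⊤ ≠ ⊥ ∧
      T ⊓ prodDiagonal K W ≠ ⊥ := by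
  constructor
  · rintro ⟨P, hP, rfl⟩
    obtain ⟨z, hz, hz₀⟩ := (Submodule.ne_bot_iff P).1 hP.ne_bot
    refine ⟨hP.finrank_prod_self, ?_, ?_, ?_⟩
    · exact (Submodule.ne_bot_iff _).2 ⟨(z, 0), by simp [hz], by simp [hz₀]⟩
    · exact (Submodule.ne_bot_iff _).2 ⟨(0, z), by simp [hz], by simp [hz₀]⟩
    · exact (Submodule.ne_bot_iff _).2 ⟨(z, z), by simp [hz], by simp [hz₀]⟩
  rintro ⟨hT, h₁, h₂, h₃⟩
  obtain ⟨w, hw, hw₀⟩ := (Submodule.ne_bot_iff _).1 h₃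
  obtain ⟨hwT, hwD⟩ := mem_inf.1 hw
  have hsup := inf_sup_inf_eq_of_finrank_eq_two hT (by simp [prod_inf_prod]) h₁ h₂
  obtain ⟨x, hx, y, hy, rfl⟩ := mem_sup.1 (hsup.symm ▸ hwT)
  obtain ⟨hxT, hx⟩ := mem_inf.1 hx
  obtain ⟨hyT, hy⟩ := mem_inf.1 hy
  simp only [mem_prod, mem_bot, mem_top, true_and, and_true] at hx hy
  have hxy : x.1 = y.2 := by simpa [hx, hy] using mem_prodDiagonal.1 hwD
  have hx₁ : x.1 ≠ 0 := fun h => hw₀ (Prod.ext (by simp [h, hy]) (by simp [← hxy, h, hx]))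
  refine ⟨K ∙ x.1, isAtom_span_singleton hx₁, (eq_of_le_of_finrank_eq ?_ ?_).symm⟩
  · intro v hv
    obtain ⟨⟨a, ha⟩, ⟨b, hb⟩⟩ :=
      And.imp mem_span_singleton.1 mem_span_singleton.1 (mem_prod.1 hv)
    have : v = a • x + b • y := Prod.ext (by simp [← ha, hy]) (by simp [← hb, hx, hxy])
    exact this ▸ add_mem (smul_mem _ a hxT) (smul_mem _ b hyT)
  · rw [(isAtom_span_singleton hx₁).finrank_prod_self, hT]

theorem LinearIndependent.exists_smul_eq_of_add_mem_span {b₀ b₁ x y : W}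
    (hb : LinearIndependent K ![b₀, b₁]) (hx : x ∈ K ∙ b₀) (hy : y ∈ K ∙ b₁)
    (hxy : x + y ∈ K ∙ (b₀ + b₁)) : ∃ l : K, x = l • b₀ ∧ y = l • b₁ := by
  obtain ⟨a, rfl⟩ := mem_span_singleton.1 hx
  obtain ⟨a', rfl⟩ := mem_span_singleton.1 hy
  obtain ⟨n, hn⟩ := mem_span_singleton.1 hxy
  obtain ⟨ha, ha'⟩ := LinearIndependent.pair_iff.1 hb (a - n) (a' - n)
    (by linear_combination (norm := module) (-1 : K) • hn)
  exact ⟨a, rfl, by rw [sub_eq_zero.1 ha', sub_eq_zero.1 ha]⟩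

/-- `L` is spanned by its meets `u`, `u'` with the transversals through `b₀` and `b₁`, and the
transversal through `b₀ + b₁` forces `u = (l • b₀, m • b₀)` and `u' = (l • b₁, m • b₁)`. -/
theorem exists_mem_prod_self_of_forall_inf_ne_bot [FiniteDimensional K W]
    (hW : finrank K W = 2) {L : Submodule K (W × W)} (hL : finrank K L = 2)
    (hLP : ∀ P : Submodule K W, IsAtom P → L ⊓ P.prod P ≠ ⊥) {v : W × W} (hv : v ∈ L) :
    ∃ X : W, v ∈ (K ∙ X).prod (K ∙ X) := by
  have : Nontrivial W := nontrivial_of_finrank_pos (R := K) (by omega)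
  obtain ⟨b₀, hb₀⟩ := exists_ne (0 : W)
  obtain ⟨b₁, hb⟩ := exists_linearIndependent_pair_of_one_lt_finrank (R := K) (by omega) hb₀
  have hb₁ : b₁ ≠ 0 := by simpa using hb.ne_zero 1
  have hb₀₁ : b₀ + b₁ ≠ 0 := fun h =>
    one_ne_zero (LinearIndependent.pair_iff.1 hb 1 1 (by simpa using h)).1
  have hdisj : (K ∙ b₀).prod (K ∙ b₀) ⊓ (K ∙ b₁).prod (K ∙ b₁) = ⊥ := by
    have : Disjoint (K ∙ b₀) (K ∙ b₁) := (disjoint_span_singleton' hb₁).2 fun h => by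
      obtain ⟨a, ha⟩ := mem_span_singleton.1 h
      exact (LinearIndependent.pair_iff' hb₀).1 hb a ha
    rw [prod_inf_prod, disjoint_iff.1 this, prod_bot]
  have h₀ := hLP _ (isAtom_span_singleton hb₀)
  have h₁ := hLP _ (isAtom_span_singleton hb₁)
  obtain ⟨w, hw, hw₀⟩ := (Submodule.ne_bot_iff _).1 (hLP _ (isAtom_span_singleton hb₀₁))
  have hsup := inf_sup_inf_eq_of_finrank_eq_two hL hdisj h₀ h₁
  obtain ⟨u, hu, u', hu', rfl⟩ := mem_sup.1 (hsup.symm ▸ (mem_inf.1 hw).1)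
  obtain ⟨l, hl, hl'⟩ := hb.exists_smul_eq_of_add_mem_span (mem_prod.1 (mem_inf.1 hu).2).1
    (mem_prod.1 (mem_inf.1 hu').2).1 (mem_prod.1 (mem_inf.1 hw).2).1
  obtain ⟨m, hm, hm'⟩ := hb.exists_smul_eq_of_add_mem_span (mem_prod.1 (mem_inf.1 hu).2).2
    (mem_prod.1 (mem_inf.1 hu').2).2 (mem_prod.1 (mem_inf.1 hw).2).2
  have hlm : l ≠ 0 ∨ m ≠ 0 := by
    by_contra! h
    exact hw₀ (Prod.ext (by simp [hl, hl', h.1]) (by simp [hm, hm', h.2]))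
  have hne : ∀ {z : W × W} {b : W}, b ≠ 0 → z.1 = l • b → z.2 = m • b → z ≠ 0 :=
    fun hb h₁ h₂ hz => by
      rcases hlm with h | h <;> simp [hz, h, hb, eq_comm (a := (0 : W))] at h₁ h₂
  rw [← hsup, eq_span_singleton_of_mem_of_finrank_eq_one
      (finrank_inf_eq_one_of_finrank_eq_two hL hdisj h₀ h₁) hu (hne hb₀ hl hm),
    eq_span_singleton_of_mem_of_finrank_eq_one
      (finrank_inf_eq_one_of_finrank_eq_two hL (by rwa [inf_comm]) h₁ h₀) hu'
      (hne hb₁ hl' hm')] at hv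
  obtain ⟨x, hx, y, hy, rfl⟩ := mem_sup.1 hv
  obtain ⟨γ, rfl⟩ := mem_span_singleton.1 hx
  obtain ⟨δ, rfl⟩ := mem_span_singleton.1 hy
  refine ⟨γ • b₀ + δ • b₁, mem_prod.2 ⟨mem_span_singleton.2 ⟨l, ?_⟩,
    mem_span_singleton.2 ⟨m, ?_⟩⟩⟩
  · simp only [Prod.fst_add, Prod.smul_fst, hl, hl']
    module
  · simp only [Prod.snd_add, Prod.smul_snd, hm, hm']
    module

theorem map_fst_sub_snd_eq_of_le_prod_self {P : Submodule K W} {p : Submodule K (W × W)}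
    (hP : IsAtom P) (hp : p ≤ P.prod P) (hpD : ¬ p ≤ prodDiagonal K W) :
    map (LinearMap.fst K W W - LinearMap.snd K W W) p = P := by
  refine (hP.le_iff_eq (fun h => hpD (LinearMap.le_ker_iff_map.2 h))).1 ?_
  rintro _ ⟨x, hx, rfl⟩
  exact sub_mem (mem_prod.1 (hp hx)).1 (mem_prod.1 (hp hx)).2

/-- Since the diagonal is the kernel of `(x, y) ↦ x - y`, the space `p ⊔ prodDiagonal K W` is
the preimage of the image `P` of `p`. -/
theorem le_sup_prodDiagonal_iff {P Q : Submodule K W} {p q : Submodule K (W × W)}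
    (hP : IsAtom P) (hQ : IsAtom Q) (hp : p ≤ P.prod P) (hq : q ≤ Q.prod Q)
    (hpD : ¬ p ≤ prodDiagonal K W) (hqD : ¬ q ≤ prodDiagonal K W) :
    q ≤ p ⊔ prodDiagonal K W ↔ P = Q := by
  rw [prodDiagonal, ← comap_map_eq, ← map_le_iff_le_comap,
    map_fst_sub_snd_eq_of_le_prod_self hQ hq hqD, map_fst_sub_snd_eq_of_le_prod_self hP hp hpD,
    hP.le_iff_eq hQ.ne_bot, eq_comm]

end Model

section Frame

variable {V W : Type*} [AddCommGroup V] [Module K V] [AddCommGroup W] [Module K W]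
  {A B : Submodule K V}

/-- The coordinate map in which `A`, `B` and `range g` become the two axes and the diagonal of
`W × W`. -/
noncomputable def coprodProjection (hAB : IsCompl A B) (g : W →ₗ[K] V) : W × W →ₗ[K] V :=
  (A.projection B hAB ∘ₗ g).coprod (B.projection A hAB.symm ∘ₗ g)

variable {g : W →ₗ[K] V}

theorem coprodProjection_apply_self (hAB : IsCompl A B) (x : W) :
    coprodProjection hAB g (x, x) = g x :=
  projection_add_projection_eq_self hAB (g x)

theorem coprodProjection_mem_left_iff (hAB : IsCompl A B) (hg : Function.Injective g)
    (hA : A ⊓ LinearMap.range g = ⊥) (x y : W) :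
    coprodProjection hAB g (x, y) ∈ A ↔ y = 0 := by
  refine ⟨fun h => ?_, by rintro rfl; simp [coprodProjection]⟩
  have h' : B.projection A hAB.symm (g y) ∈ A ⊓ B := mem_inf.2
    ⟨(Submodule.add_mem_iff_right A (projection_apply_mem hAB (g x))).1 h,
      projection_apply_mem _ _⟩
  rw [hAB.inf_eq_bot, mem_bot, projection_apply_eq_zero_iff] at h'
  have hy : g y ∈ A ⊓ LinearMap.range g := mem_inf.2 ⟨h', LinearMap.mem_range_self g y⟩
  rwa [hA, mem_bot, map_eq_zero_iff g hg] at hy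

theorem coprodProjection_mem_right_iff (hAB : IsCompl A B) (hg : Function.Injective g)
    (hB : B ⊓ LinearMap.range g = ⊥) (x y : W) :
    coprodProjection hAB g (x, y) ∈ B ↔ x = 0 := by
  refine ⟨fun h => ?_, by rintro rfl; simp [coprodProjection]⟩
  have h' : A.projection B hAB (g x) ∈ A ⊓ B := mem_inf.2
    ⟨projection_apply_mem _ _,
      (Submodule.add_mem_iff_left B (projection_apply_mem hAB.symm (g y))).1 h⟩
  rw [hAB.inf_eq_bot, mem_bot, projection_apply_eq_zero_iff] at h'
  have hx : g x ∈ B ⊓ LinearMap.range g := mem_inf.2 ⟨h', LinearMap.mem_range_self g x⟩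
  rwa [hB, mem_bot, map_eq_zero_iff g hg] at hx

theorem coprodProjection_injective (hAB : IsCompl A B) (hg : Function.Injective g)
    (hA : A ⊓ LinearMap.range g = ⊥) (hB : B ⊓ LinearMap.range g = ⊥) :
    Function.Injective (coprodProjection hAB g) := by
  rw [← LinearMap.ker_eq_bot, eq_bot_iff]
  rintro ⟨x, y⟩ h
  have h₀ : coprodProjection hAB g (x, y) = 0 := h
  simp [(coprodProjection_mem_right_iff hAB hg hB x y).1 (h₀ ▸ zero_mem B),
    (coprodProjection_mem_left_iff hAB hg hA x y).1 (h₀ ▸ zero_mem A)]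

theorem coprodProjection_mem_range_iff (hAB : IsCompl A B) (hg : Function.Injective g)
    (hA : A ⊓ LinearMap.range g = ⊥) (hB : B ⊓ LinearMap.range g = ⊥) (x y : W) :
    coprodProjection hAB g (x, y) ∈ LinearMap.range g ↔ x = y := by
  refine ⟨fun ⟨z, hz⟩ => ?_, by rintro rfl; exact LinearMap.mem_range.2 ⟨x, by
    rw [coprodProjection_apply_self]⟩⟩
  rw [← coprodProjection_apply_self hAB] at hz
  obtain ⟨hx, hy⟩ := Prod.ext_iff.1 (coprodProjection_injective hAB hg hA hB hz)
  exact hx.symm.trans hy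

theorem exists_linearEquiv_axes_diagonal [FiniteDimensional K V] [FiniteDimensional K W]
    {C : Submodule K V} (hAB : IsCompl A B) (hAC : A ⊓ C = ⊥) (hBC : B ⊓ C = ⊥)
    (hC : finrank K C + finrank K C = finrank K V) (hW : finrank K W = finrank K C) :
    ∃ e : (W × W) ≃ₗ[K] V, A = map e.toLinearMap ((⊤ : Submodule K W).prod ⊥) ∧
      B = map e.toLinearMap ((⊥ : Submodule K W).prod ⊤) ∧
      C = map e.toLinearMap (prodDiagonal K W) := by
  obtain ⟨f⟩ : Nonempty (W ≃ₗ[K] C) := ⟨LinearEquiv.ofFinrankEq W C hW⟩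
  set g := C.subtype ∘ₗ f.toLinearMap
  have hg : Function.Injective g := C.injective_subtype.comp f.injective
  have hgC : LinearMap.range g = C := by
    rw [LinearMap.range_comp, LinearEquiv.range, Submodule.map_top, range_subtype]
  rw [← hgC] at hAC hBC ⊢
  let e := (coprodProjection hAB g).linearEquivOfInjective
    (coprodProjection_injective hAB hg hAC hBC) (by rw [Module.finrank_prod, hW, hC])
  have he : ∀ {S' : Submodule K V} {S : Submodule K (W × W)},
      (∀ x y, coprodProjection hAB g (x, y) ∈ S' ↔ (x, y) ∈ S) → S' = map e.toLinearMap S :=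
    fun {S' S} h => by
      ext v
      obtain ⟨⟨x, y⟩, rfl⟩ := e.surjective v
      rw [mem_map_equiv, e.symm_apply_apply, ← h]
      rfl
  exact ⟨e, he (by simp [coprodProjection_mem_left_iff hAB hg hAC]),
    he (by simp [coprodProjection_mem_right_iff hAB hg hBC]),
    he (by simp [coprodProjection_mem_range_iff hAB hg hAC hBC])⟩

end Frame

section Quadric

theorem map_mem_transv3_iff {M : Type*} [AddCommGroup M] [Module K M] (e : M ≃ₗ[K] (Fin 4 → K))
    {T A B C : Submodule K M} :
    map e.toLinearMap T ∈
        transv3 (map e.toLinearMap A) (map e.toLinearMap B) (map e.toLinearMap C) ↔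
      finrank K T = 2 ∧ T ⊓ A ≠ ⊥ ∧ T ⊓ B ≠ ⊥ ∧ T ⊓ C ≠ ⊥ := by
  simp only [transv3, isLine, meets, Set.mem_ofPred_eq, e.finrank_map_eq,
    ← map_inf _ e.injective, ne_eq, Submodule.map_eq_bot_iff]

variable {W : Type*} [AddCommGroup W] [Module K W] (e : (W × W) ≃ₗ[K] (Fin 4 → K))

theorem mem_transv3_map_axes_diagonal_iff [FiniteDimensional K W] {T : Subsp K} :
    T ∈ transv3 (map e.toLinearMap ((⊤ : Submodule K W).prod ⊥))
      (map e.toLinearMap ((⊥ : Submodule K W).prod ⊤)) (map e.toLinearMap (prodDiagonal K W)) ↔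
      ∃ P : Submodule K W, IsAtom P ∧ T = map e.toLinearMap (P.prod P) := by
  obtain ⟨T, rfl⟩ := map_surjective_of_surjective e.surjective T
  simp only [map_mem_transv3_iff, ← exists_isAtom_eq_prod_self_iff,
    (map_injective_of_injective e.injective).eq_iff]

theorem exists_le_map_prod_self_of_mem_quadPts [FiniteDimensional K W] (hW : finrank K W = 2)
    {p : Subsp K} (hp : p ∈ quadPts (map e.toLinearMap ((⊤ : Submodule K W).prod ⊥))
      (map e.toLinearMap ((⊥ : Submodule K W).prod ⊤)) (map e.toLinearMap (prodDiagonal K W))) :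
    ∃ P : Submodule K W, IsAtom P ∧ p ≤ map e.toLinearMap (P.prod P) := by
  obtain ⟨hp, L, ⟨hL, hLT⟩, hpL⟩ := hp
  obtain ⟨L, rfl⟩ := map_surjective_of_surjective e.surjective L
  obtain ⟨u, hu, hu₀⟩ := (Submodule.ne_bot_iff p).1 (isAtom_iff_finrank_eq_one.2 hp).ne_bot
  obtain ⟨v, hv, rfl⟩ := mem_map.1 (hpL hu)
  have hLP : ∀ P : Submodule K W, IsAtom P → L ⊓ P.prod P ≠ ⊥ := fun P hP => by
    have := hLT _ ((mem_transv3_map_axes_diagonal_iff e).2 ⟨P, hP, rfl⟩)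
    rwa [meets, ← map_inf _ e.injective, ne_eq, Submodule.map_eq_bot_iff] at this
  obtain ⟨X, hX⟩ := exists_mem_prod_self_of_forall_inf_ne_bot hW (e.finrank_map_eq L ▸ hL) hLP hv
  have hX₀ : X ≠ 0 := by
    rintro rfl
    exact hu₀ (by simpa using hX)
  refine ⟨K ∙ X, isAtom_span_singleton hX₀, ?_⟩
  rw [eq_span_singleton_of_mem_of_finrank_eq_one hp hu hu₀, span_singleton_le_iff_mem]
  exact mem_map_of_mem hX

theorem map_prod_self_inf_map_axis (P : Submodule K W) :
    map e.toLinearMap (P.prod P) ⊓ map e.toLinearMap ((⊤ : Submodule K W).prod ⊥) =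
      map e.toLinearMap (P.prod ⊥) := by
  rw [← map_inf _ e.injective, prod_inf_prod, inf_top_eq, inf_bot_eq]

theorem isPoint_map_prod_self_inf_map_axis {P : Submodule K W} (hP : IsAtom P) :
    isPoint (map e.toLinearMap (P.prod P) ⊓ map e.toLinearMap ((⊤ : Submodule K W).prod ⊥)) := by
  rw [isPoint, map_prod_self_inf_map_axis, e.finrank_map_eq, hP.finrank_prod_bot]

theorem eq_of_le_map_prod_self {p : Subsp K} {P Q : Submodule K W} (hp : isPoint p)
    (hP : IsAtom P) (hQ : IsAtom Q) (hpP : p ≤ map e.toLinearMap (P.prod P))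
    (hpQ : p ≤ map e.toLinearMap (Q.prod Q)) : P = Q := by
  refine hP.eq_of_prod_self_inf_ne_bot hQ fun h => (isAtom_iff_finrank_eq_one.2 hp).ne_bot ?_
  rw [eq_bot_iff, ← map_bot e.toLinearMap, ← h, map_inf _ e.injective]
  exact le_inf hpP hpQ

end Quadric

theorem quadric_ruling_correspondence_general
    (A00 A10 A01 : Subsp K)
    (h00 : isLine A00) (h10 : isLine A10) (h01 : isLine A01)
    (hs1 : skew A00 A10) (hs2 : skew A00 A01) (hs3 : skew A10 A01) :
    (∀ p ∈ quadPts A00 A10 A01, ¬ p ≤ A00 → ¬ p ≤ A10 → ¬ p ≤ A01 →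
      (∃! B : Subsp K, B ∈ transv3 A00 A10 A01 ∧ p ≤ B) ∧
      (∀ B ∈ transv3 A00 A10 A01, p ≤ B → isPoint (B ⊓ A00))) ∧
    (∀ π₁ π₂ : Subsp K, isPlane π₁ → isPlane π₂ →
      ∀ p ∈ quadPts A00 A10 A01, ∀ q ∈ quadPts A00 A10 A01,
      p ≤ π₁ → q ≤ π₂ → ¬ p ≤ A01 → ¬ q ≤ A01 →
      ∀ Bp ∈ transv3 A00 A10 A01, ∀ Bq ∈ transv3 A00 A10 A01,
      p ≤ Bp → q ≤ Bq →
      (q ≤ p ⊔ A01 ↔ Bp ⊓ A00 = Bq ⊓ A00)) := by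
  have hW : finrank K (Fin 2 → K) = 2 := finrank_fin_fun K
  have hAB : IsCompl A00 A10 :=
    (isCompl_iff_disjoint _ _ (by rw [finrank_fin_fun, h00, h10])).2 (disjoint_iff.2 hs1)
  obtain ⟨e, rfl, rfl, rfl⟩ := exists_linearEquiv_axes_diagonal (W := Fin 2 → K) hAB hs2 hs3
    (by rw [h01, finrank_fin_fun]) (by rw [hW, h01])
  refine ⟨fun p hp _ _ _ => ?_, fun _ _ _ _ p _ q _ _ _ hpD hqD Bp hBp Bq hBq hpB hqB => ?_⟩
  · obtain ⟨P, hP, hpP⟩ := exists_le_map_prod_self_of_mem_quadPts e hW hp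
    refine ⟨⟨_, ⟨(mem_transv3_map_axes_diagonal_iff e).2 ⟨P, hP, rfl⟩, hpP⟩,
      fun B ⟨hB, hpB⟩ => ?_⟩, fun B hB _ => ?_⟩
    · obtain ⟨Q, hQ, rfl⟩ := (mem_transv3_map_axes_diagonal_iff e).1 hB
      rw [eq_of_le_map_prod_self e hp.1 hQ hP hpB hpP]
    · obtain ⟨Q, hQ, rfl⟩ := (mem_transv3_map_axes_diagonal_iff e).1 hB
      exact isPoint_map_prod_self_inf_map_axis e hQ
  · obtain ⟨P, hP, rfl⟩ := (mem_transv3_map_axes_diagonal_iff e).1 hBp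
    obtain ⟨Q, hQ, rfl⟩ := (mem_transv3_map_axes_diagonal_iff e).1 hBq
    obtain ⟨p, rfl⟩ := map_surjective_of_surjective e.surjective p
    obtain ⟨q, rfl⟩ := map_surjective_of_surjective e.surjective q
    rw [map_le_map_iff_of_injective e.injective] at hpD hqD hpB hqB
    rw [map_prod_self_inf_map_axis, map_prod_self_inf_map_axis,
      (map_injective_of_injective e.injective).eq_iff, prod_bot_inj, ← Submodule.map_sup,
      map_le_map_iff_of_injective e.injective]
    exact le_sup_prodDiagonal_iff hP hQ hpB hqB hpD hqD

/-- On the doubly ruled quadric through the pairwise skew lines A00, A10, A01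
(rulings of one family): through each point of the quadric off these lines
there passes a unique ruling B of the other family, meeting A00 in a point b;
and two points p, q of the quadric correspond under projection from the
center A01 if and only if they determine the same point b on A00. -/
theorem quadric_ruling_correspondence (h2 : (2 : K) ≠ 0)
    (A00 A10 A01 : Subsp K)
    (h00 : isLine A00) (h10 : isLine A10) (h01 : isLine A01)
    (hs1 : skew A00 A10) (hs2 : skew A00 A01) (hs3 : skew A10 A01) :
    (∀ p ∈ quadPts A00 A10 A01, ¬ p ≤ A00 → ¬ p ≤ A10 → ¬ p ≤ A01 →
      (∃! B : Subsp K, B ∈ transv3 A00 A10 A01 ∧ p ≤ B) ∧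
      (∀ B ∈ transv3 A00 A10 A01, p ≤ B → isPoint (B ⊓ A00))) ∧
    (∀ π₁ π₂ : Subsp K, isPlane π₁ → isPlane π₂ →
      ∀ p ∈ quadPts A00 A10 A01, ∀ q ∈ quadPts A00 A10 A01,
      p ≤ π₁ → q ≤ π₂ → ¬ p ≤ A01 → ¬ q ≤ A01 →
      ∀ Bp ∈ transv3 A00 A10 A01, ∀ Bq ∈ transv3 A00 A10 A01,
      p ≤ Bp → q ≤ Bq →
      (q ≤ p ⊔ A01 ↔ Bp ⊓ A00 = Bq ⊓ A00)) :=
  quadric_ruling_correspondence_general A00 A10 A01 h00 h10 h01 hs1 hs2 hs3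
end
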